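/- Let V = {1,…,n} and let λ = (λ_1,…,λ_k) be an integer sequence with 0 < λ_1 < ⋯ < λ_k ≤ n satisfying λ_{i+1} − λ_i ≤ λ_1 for all i = 1,…,k−1 and λ_1 + λ_k ≥ n. Set λ_{k+1} = n. Let S ⊊ V be a proper subset and let 1 ≤ i ≤ k be an index with λ_i ≤ |S| < λ_{i+1}. Then every subset A ⊆ S with |A| = λ_i is a transversal of the induced subhypergraph 𝓗(λ)_S. -/
import Mathlib


open Finset

/-- An `H`-move in hypergraph NIM: strictly decrease every pile in `H`, keep others. -/
def HMove {n : ℕ} (H : Finset (Fin n)) (x x' : Fin n → ℕ) : Prop :=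
  (∀ i ∈ H, x' i < x i) ∧ ∀ i ∉ H, x' i = x i

/-- A move in `NIM_𝓗`: an `H`-move for some hyperedge `H ∈ 𝓗`. -/
def Move {n : ℕ} (F : Set (Finset (Fin n))) (x x' : Fin n → ℕ) : Prop :=
  ∃ H ∈ F, HMove H x x'

/-- Minimal excludant of a set of naturals. -/
noncomputable def mex (S : Set ℕ) : ℕ := sInf {g : ℕ | g ∉ S}

/-- The Sprague–Grundy function of `NIM_𝓗`, defined by well-founded recursion.
(The guard `∑ x' < ∑ x` is automatic whenever `∅ ∉ 𝓗`.) -/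
noncomputable def grundy {n : ℕ} (F : Set (Finset (Fin n))) (x : Fin n → ℕ) : ℕ :=
  mex {g : ℕ | ∃ x', ∃ _h : Move F x x' ∧ (∑ i, x' i) < ∑ i, x i, grundy F x' = g}
termination_by ∑ i, x i
decreasing_by exact _h.2

/-- `N` consecutive moves are possible from `x`: there are hyperedges `H¹,…,H^N ∈ 𝓗`
whose partial sums of characteristic vectors stay `≤ x`. -/
def TetrisReach {n : ℕ} (F : Set (Finset (Fin n))) (x : Fin n → ℕ) (N : ℕ) : Prop :=
  ∃ f : ℕ → Finset (Fin n), (∀ j < N, f j ∈ F) ∧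
    ∀ j < N, ∀ i, (∑ l ∈ Finset.range (j + 1), if i ∈ f l then 1 else 0) ≤ x i

/-- The Tetris function: the largest `N` with `TetrisReach`. -/
noncomputable def tetris {n : ℕ} (F : Set (Finset (Fin n))) (x : Fin n → ℕ) : ℕ :=
  sSup {N | TetrisReach F x N}

/-- `m(x)`: the minimum pile size. -/
noncomputable def mval {n : ℕ} (x : Fin n → ℕ) : ℕ := sInf (Set.range x)

/-- `y_𝓗(x) = 𝒯_𝓗(x − m(x)e) + 1`. -/
noncomputable def yval {n : ℕ} (F : Set (Finset (Fin n))) (x : Fin n → ℕ) : ℕ :=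
  tetris F (fun i => x i - mval x) + 1

/-- `v_𝓗(x)`. -/
noncomputable def vval {n : ℕ} (F : Set (Finset (Fin n))) (x : Fin n → ℕ) : ℕ :=
  Nat.choose (yval F x) 2 + ((mval x - Nat.choose (yval F x) 2 - 1) % yval F x)

/-- A position is long if `m(x) ≤ C(y_𝓗(x), 2)`. -/
noncomputable def IsLong {n : ℕ} (F : Set (Finset (Fin n))) (x : Fin n → ℕ) : Prop :=
  mval x ≤ Nat.choose (yval F x) 2

/-- The Jenkyns–Mayberry function `𝒰_𝓗`. -/
noncomputable def jmU {n : ℕ} (F : Set (Finset (Fin n))) (x : Fin n → ℕ) : ℕ :=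
  if mval x ≤ Nat.choose (yval F x) 2 then tetris F x else vval F x

/-- `𝓗` is a JM hypergraph if its SG function is given by the JM formula. -/
def IsJM {n : ℕ} (F : Set (Finset (Fin n))) : Prop :=
  ∀ x : Fin n → ℕ, grundy F x = jmU F x

/-- `T` is a transversal of `𝓗` if it meets every hyperedge. -/
def IsTransversal {n : ℕ} (F : Set (Finset (Fin n))) (T : Finset (Fin n)) : Prop :=
  ∀ H ∈ F, (T ∩ H).Nonempty

/-- `𝓗` is transversal-free if no hyperedge is a transversal. -/
def TransversalFree {n : ℕ} (F : Set (Finset (Fin n))) : Prop :=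
  ∀ H ∈ F, ¬ IsTransversal F H

/-- The induced subhypergraph `𝓗_S`. -/
def inducedH {n : ℕ} (F : Set (Finset (Fin n))) (S : Finset (Fin n)) : Set (Finset (Fin n)) :=
  {H | H ∈ F ∧ H ⊆ S}

/-- `𝓗` is minimal transversal-free. -/
def MinTransversalFree {n : ℕ} (F : Set (Finset (Fin n))) : Prop :=
  TransversalFree F ∧
    ∀ S : Finset (Fin n), S ⊂ Finset.univ → (inducedH F S).Nonempty →
      ¬ TransversalFree (inducedH F S)

/-- The symmetric hypergraph `𝓗(λ)` of a spectrum `λ₁ < ⋯ < λ_k` (1-indexed). -/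
def Hlambda {n : ℕ} (k : ℕ) (gl : ℕ → ℕ) : Set (Finset (Fin n)) :=
  {H | ∃ j, 1 ≤ j ∧ j ≤ k ∧ H.card = gl j}

/-- If `λ_i ≤ |S| < λ_{i+1}` (with the convention `λ_{k+1} = n`) for a proper
subset `S ⊊ V`, then every `λ_i`-element subset of `S` is a transversal of the
induced subhypergraph `𝓗(λ)_S`. -/
theorem Hlambda_induced_transversal
    (n k : ℕ) (gl : ℕ → ℕ) (hk : 1 ≤ k) (hpos : 0 < gl 1)
    (hmono : ∀ i, 1 ≤ i → i < k → gl i < gl (i + 1)) (hle : gl k ≤ n)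
    (hgap : ∀ i, 1 ≤ i → i < k → gl (i + 1) - gl i ≤ gl 1)
    (hsum : n ≤ gl 1 + gl k)
    (S : Finset (Fin n)) (hS : S ⊂ Finset.univ)
    (i : ℕ) (hi1 : 1 ≤ i) (hik : i ≤ k)
    (hcard1 : gl i ≤ S.card) (hcard2 : S.card < if i = k then n else gl (i + 1))
    (A : Finset (Fin n)) (hA : A ⊆ S) (hAcard : A.card = gl i) :
    IsTransversal (inducedH (Hlambda (n := n) k gl) S) A := by
  intro H hH
  obtain ⟨⟨j, hj1, hjk, hHcard⟩, hHS⟩ := hH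
  by_contra hne
  rw [Finset.not_nonempty_iff_eq_empty] at hne
  have hdisj : Disjoint A H := Finset.disjoint_iff_inter_eq_empty.mpr hne
  have hcard : A.card + H.card ≤ S.card := by
    rw [← Finset.card_union_of_disjoint hdisj]
    exact Finset.card_le_card (Finset.union_subset hA hHS)
  have hmono' : ∀ j, 1 ≤ j → j ≤ k → gl 1 ≤ gl j := by
    intro j
    induction j with
    | zero => omega
    | succ m ih =>
      intro _ hmk
      rcases Nat.eq_zero_or_pos m with hm | hm
      · simp [hm]
      · exact le_of_lt (lt_of_le_of_lt (ih hm (by omega)) (hmono m hm (by omega)))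
  have h1j := hmono' j hj1 hjk
  rw [hAcard, hHcard] at hcard
  by_cases hik' : i = k
  · subst hik'
    rw [if_pos rfl] at hcard2
    omega
  · have hiltk : i < k := lt_of_le_of_ne hik hik'
    rw [if_neg hik'] at hcard2
    have := hgap i hi1 hiltk
    have := hmono i hi1 hiltk
    omega
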